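/- arXiv:2201.06385 — 2 statements merged into one kernel-verified Lean document; each statement's English description precedes it below -/
import Mathlib

section
/- For a connected weighted graph G and any cycle in G with link set H ⊆ E, the sum of relative resistances over the cycle satisfies Σ_{(i,j)∈H} c_ij·ω_ij ≤ |H| − 1. -/
open Matrix

variable {V : Type*}

/- The weighted Laplacian matrix of a weighted graph `(V, G, c)`:
`Q i i = ∑_{k ∼ i} c i k`, `Q i j = -c i j` for links `i ∼ j`, and `0` otherwise. -/
open Classical in
noncomputable def lapMatrix [Fintype V] (G : SimpleGraph V) (c : V → V → ℝ) :
    Matrix V V ℝ :=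
  Matrix.of fun i j =>
    if i = j then ∑ k, if G.Adj i k then c i k else 0
    else if G.Adj i j then -c i j else 0

/- The four Penrose equations characterizing the Moore–Penrose pseudoinverse. -/
def IsMoorePenroseInv [Fintype V] (Q Qd : Matrix V V ℝ) : Prop :=
  Q * Qd * Q = Q ∧ Qd * Q * Qd = Qd ∧ (Q * Qd)ᵀ = Q * Qd ∧ (Qd * Q)ᵀ = Qd * Q

/- The effective resistance `ω i j = (e_i - e_j)ᵀ Q† (e_i - e_j)`, computed from a
pseudoinverse `Qd` of the Laplacian. -/
open Classical in
noncomputable def effRes [Fintype V] (Qd : Matrix V V ℝ) (i j : V) : ℝ :=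
  (Pi.single i 1 - Pi.single j 1) ⬝ᵥ Qd *ᵥ (Pi.single i 1 - Pi.single j 1)

lemma effRes_symm [Fintype V] (Qd : Matrix V V ℝ) (i j : V) :
    effRes Qd i j = effRes Qd j i := by
  unfold effRes
  simp [Matrix.mulVec_sub]
  ring

/- The relative resistance `c i j * ω i j` as a function on unordered links. -/
noncomputable def relResEdge [Fintype V] (c : V → V → ℝ) (hc : ∀ i j, c i j = c j i)
    (Qd : Matrix V V ℝ) : Sym2 V → ℝ :=
  Sym2.lift ⟨fun i j => c i j * effRes Qd i j, fun a b => by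
    show c a b * effRes Qd a b = c b a * effRes Qd b a
    rw [hc a b, effRes_symm]⟩

/-! ### Auxiliary lemmas -/

section Aux

/-- Uniqueness of the Moore-Penrose pseudoinverse. -/
lemma aux_mp_unique [Fintype V] (Q X Y : Matrix V V ℝ)
    (hX : IsMoorePenroseInv Q X) (hY : IsMoorePenroseInv Q Y) : X = Y := by
  obtain ⟨hX1, hX2, hX3, hX4⟩ := hX
  obtain ⟨hY1, hY2, hY3, hY4⟩ := hY
  have e1 : Qᵀ = Qᵀ * (Q * Y) := by
    conv_lhs => rw [← hY1]
    rw [Matrix.transpose_mul, hY3]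
  have h1 : Q * X = Q * Y := by
    calc Q * X = (Q * X)ᵀ := hX3.symm
    _ = Xᵀ * Qᵀ := Matrix.transpose_mul _ _
    _ = Xᵀ * (Qᵀ * (Q * Y)) := by rw [← e1]
    _ = (Xᵀ * Qᵀ) * (Q * Y) := (mul_assoc _ _ _).symm
    _ = (Q * X)ᵀ * (Q * Y) := by rw [Matrix.transpose_mul]
    _ = (Q * X) * (Q * Y) := by rw [hX3]
    _ = (Q * X * Q) * Y := by rw [mul_assoc (Q*X) Q Y]
    _ = Q * Y := by rw [hX1]
  have e2 : Qᵀ = (Y * Q) * Qᵀ := by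
    conv_lhs => rw [← hY1]
    rw [mul_assoc, Matrix.transpose_mul, hY4]
  have h2 : X * Q = Y * Q := by
    calc X * Q = (X * Q)ᵀ := hX4.symm
    _ = Qᵀ * Xᵀ := Matrix.transpose_mul _ _
    _ = ((Y * Q) * Qᵀ) * Xᵀ := by rw [← e2]
    _ = (Y * Q) * (Qᵀ * Xᵀ) := mul_assoc _ _ _
    _ = (Y * Q) * (X * Q)ᵀ := by rw [Matrix.transpose_mul]
    _ = (Y * Q) * (X * Q) := by rw [hX4]
    _ = Y * (Q * X * Q) := by simp only [mul_assoc]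
    _ = Y * Q := by rw [hX1]
  calc X = X * Q * X := hX2.symm
  _ = X * (Q * Y) := by rw [mul_assoc, h1]
  _ = (X * Q) * Y := (mul_assoc _ _ _).symm
  _ = (Y * Q) * Y := by rw [h2]
  _ = Y := hY2

variable [Fintype V] [DecidableEq V] (G : SimpleGraph V) [DecidableRel G.Adj]
  (c : V → V → ℝ)

lemma aux_lap_entry (i j : V) :
    lapMatrix G c i j = (if i = j then ∑ k, (if G.Adj i k then c i k else 0) else 0)
      - (if G.Adj i j then c i j else 0) := by
  by_cases h : i = j
  · subst h
    simp only [lapMatrix, Matrix.of_apply, if_pos rfl, SimpleGraph.irrefl, if_neg, ite_false,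
      sub_zero, if_neg (G.irrefl (v := i))]
    exact Finset.sum_congr rfl fun k _ => by by_cases hk : G.Adj i k <;> simp [hk]
  · simp only [lapMatrix, Matrix.of_apply, if_neg h]
    by_cases hk : G.Adj i j <;> simp [hk]

lemma aux_lap_symm_entry (hsymm : ∀ i j, c i j = c j i) (i j : V) :
    lapMatrix G c i j = lapMatrix G c j i := by
  by_cases h : i = j
  · subst h; rfl
  · rw [aux_lap_entry, aux_lap_entry, if_neg h, if_neg (Ne.symm h), hsymm i j]
    by_cases had : G.Adj i j
    · rw [if_pos had, if_pos ((G.adj_comm i j).mp had)]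
    · rw [if_neg had, if_neg (fun h' => had ((G.adj_comm i j).mpr h'))]

lemma aux_lap_transpose (hsymm : ∀ i j, c i j = c j i) :
    (lapMatrix G c)ᵀ = lapMatrix G c := by
  ext i j
  exact aux_lap_symm_entry G c hsymm j i

lemma aux_lap_qf (hsymm : ∀ i j, c i j = c j i) (x : V → ℝ) :
    x ⬝ᵥ lapMatrix G c *ᵥ x
      = (∑ i, ∑ j, (if G.Adj i j then c i j * (x i - x j)^2 else 0)) / 2 := by
  have hexp : x ⬝ᵥ lapMatrix G c *ᵥ x
      = ∑ i, ∑ j, x i * (lapMatrix G c i j * x j) := by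
    simp [dotProduct, Matrix.mulVec, Finset.mul_sum]
  have hterm : ∀ i j, x i * (lapMatrix G c i j * x j)
      = (if i = j then x i * ((∑ k, if G.Adj i k then c i k else 0) * x j) else 0)
        - (if G.Adj i j then c i j * (x i * x j) else 0) := by
    intro i j
    rw [aux_lap_entry]
    split_ifs <;> ring
  have h1 : x ⬝ᵥ lapMatrix G c *ᵥ x
      = (∑ i, ∑ j, (if G.Adj i j then c i j * (x i)^2 else 0))
        - ∑ i, ∑ j, (if G.Adj i j then c i j * (x i * x j) else 0) := by
    rw [hexp]
    rw [← Finset.sum_sub_distrib]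
    apply Finset.sum_congr rfl
    intro i _
    simp_rw [hterm i]
    rw [Finset.sum_sub_distrib]
    congr 1
    rw [Finset.sum_ite_eq Finset.univ i
      (fun j => x i * ((∑ k, if G.Adj i k then c i k else 0) * x j)), if_pos (Finset.mem_univ i)]
    rw [Finset.sum_mul, Finset.mul_sum]
    apply Finset.sum_congr rfl
    intro k _
    split_ifs <;> ring
  have hD' : (∑ i, ∑ j, (if G.Adj i j then c i j * (x j)^2 else 0))
      = ∑ i, ∑ j, (if G.Adj i j then c i j * (x i)^2 else 0) := by
    rw [Finset.sum_comm]
    apply Finset.sum_congr rfl; intro j _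
    apply Finset.sum_congr rfl; intro i _
    rw [hsymm i j]
    by_cases had : G.Adj i j
    · rw [if_pos had, if_pos ((G.adj_comm i j).mp had)]
    · rw [if_neg had, if_neg (fun h' => had ((G.adj_comm i j).mpr h'))]
  have hexpand : ∀ i j : V, (if G.Adj i j then c i j * (x i - x j)^2 else 0)
      = ((if G.Adj i j then c i j * (x i)^2 else 0)
          + (if G.Adj i j then c i j * (x j)^2 else 0))
        - 2 * (if G.Adj i j then c i j * (x i * x j) else 0) := by
    intro i j
    split_ifs <;> ring
  simp_rw [hexpand, Finset.sum_sub_distrib, Finset.sum_add_distrib, ← Finset.mul_sum]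
  rw [hD', h1]
  ring

lemma aux_lap_psd (hsymm : ∀ i j, c i j = c j i)
    (hpos : ∀ i j, G.Adj i j → 0 < c i j) : (lapMatrix G c).PosSemidef := by
  refine Matrix.posSemidef_iff_dotProduct_mulVec.mpr ⟨?_, ?_⟩
  · show (lapMatrix G c)ᴴ = lapMatrix G c
    ext i j
    show star (lapMatrix G c j i) = lapMatrix G c i j
    rw [star_trivial]
    exact (aux_lap_symm_entry G c hsymm i j).symm
  · intro x
    have hx : star x = x := by
      funext i; exact star_trivial _
    rw [hx, aux_lap_qf G c hsymm]
    apply div_nonneg _ (by norm_num)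
    apply Finset.sum_nonneg; intro i _
    apply Finset.sum_nonneg; intro j _
    split_ifs with h
    · exact mul_nonneg (hpos i j h).le (sq_nonneg _)
    · exact le_refl 0

end Aux

section Spectral

variable {m : Type*} [Fintype m] [DecidableEq m]

lemma aux_trace_eq_sum_eigen {A : Matrix m m ℝ} (hA : A.IsHermitian) :
    A.trace = ∑ i, hA.eigenvalues i := by
  conv_lhs => rw [hA.spectral_theorem]
  rw [Unitary.conjStarAlgAut_apply, Matrix.trace_mul_cycle, (Matrix.mem_unitaryGroup_iff').mp (hA.eigenvectorUnitary).2,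
    one_mul]
  simp [Matrix.trace_diagonal]

lemma aux_eigen_le_one {A : Matrix m m ℝ} (hA : A.IsHermitian)
    (h1 : ((1 : Matrix m m ℝ) - A).PosSemidef) (i : m) : hA.eigenvalues i ≤ 1 := by
  set v : m → ℝ := ⇑(hA.eigenvectorBasis i) with hv
  have hvne : v ≠ 0 := by
    intro h0
    apply hA.eigenvectorBasis.orthonormal.ne_zero i
    ext j
    exact congrFun h0 j
  have hvv : 0 < v ⬝ᵥ v := by
    rcases (Finset.sum_nonneg fun j (_ : j ∈ Finset.univ) =>
      mul_self_nonneg (v j)).lt_or_eq with h | h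
    · exact h
    · exfalso
      apply hvne
      funext j
      have hj := (Finset.sum_eq_zero_iff_of_nonneg
        (fun j (_ : j ∈ Finset.univ) => mul_self_nonneg (v j))).mp h.symm j (Finset.mem_univ j)
      have := mul_self_eq_zero.mp hj
      simpa using this
  have hAv : A *ᵥ v = hA.eigenvalues i • v := hA.mulVec_eigenvectorBasis i
  have hq := h1.dotProduct_mulVec_nonneg v
  have hst : star v = v := funext fun _ => star_trivial _
  rw [hst, Matrix.sub_mulVec, Matrix.one_mulVec, dotProduct_sub, hAv,
    dotProduct_smul] at hq
  have : 0 ≤ (1 - hA.eigenvalues i) * (v ⬝ᵥ v) := by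
    have : hA.eigenvalues i • (v ⬝ᵥ v) = hA.eigenvalues i * (v ⬝ᵥ v) := rfl
    nlinarith [hq]
  nlinarith [this, hvv]

lemma aux_one_sub_psd {A : Matrix m m ℝ} (hA : A.PosSemidef)
    (h2 : ∀ z : m → ℝ, (A *ᵥ z) ⬝ᵥ (A *ᵥ z) ≤ z ⬝ᵥ (A *ᵥ z)) :
    ((1 : Matrix m m ℝ) - A).PosSemidef := by
  refine Matrix.posSemidef_iff_dotProduct_mulVec.mpr ⟨?_, ?_⟩
  · exact Matrix.isHermitian_one.sub hA.1
  · intro x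
    have hst : star x = x := funext fun _ => star_trivial _
    rw [hst, Matrix.sub_mulVec, Matrix.one_mulVec, dotProduct_sub]
    have ht0 : 0 ≤ x ⬝ᵥ (A *ᵥ x) := by have := hA.dotProduct_mulVec_nonneg x; rwa [hst] at this
    have hCS : (x ⬝ᵥ (A *ᵥ x))^2 ≤ (x ⬝ᵥ x) * ((A *ᵥ x) ⬝ᵥ (A *ᵥ x)) := by
      have := Finset.sum_mul_sq_le_sq_mul_sq Finset.univ x (A *ᵥ x)
      simpa [dotProduct, pow_two] using this
    have h2' := h2 x
    have hxx : 0 ≤ x ⬝ᵥ x := Finset.sum_nonneg fun i _ => mul_self_nonneg _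
    nlinarith [hCS, h2', ht0, hxx, mul_le_mul_of_nonneg_left h2' hxx]

lemma aux_trace_le {A : Matrix m m ℝ} (hA : A.PosSemidef)
    (h1 : ((1 : Matrix m m ℝ) - A).PosSemidef)
    (z : m → ℝ) (hz : z ≠ 0) (hAz : A *ᵥ z = 0) :
    A.trace ≤ (Fintype.card m : ℝ) - 1 := by
  have hdet : A.det = 0 := Matrix.exists_mulVec_eq_zero_iff.mp ⟨z, hz, hAz⟩
  have hprod0 := hA.1.det_eq_prod_eigenvalues
  rw [hdet] at hprod0
  have hprod : (∏ i, (hA.1.eigenvalues i : ℝ)) = 0 := by exact_mod_cast hprod0.symm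
  obtain ⟨i0, -, hi0⟩ := Finset.prod_eq_zero_iff.mp hprod
  have hcard : 1 ≤ Fintype.card m := Fintype.card_pos_iff.mpr ⟨i0⟩
  calc A.trace = ∑ i, hA.1.eigenvalues i := aux_trace_eq_sum_eigen hA.1
  _ = ∑ i ∈ Finset.univ.erase i0, hA.1.eigenvalues i := by
      rw [← Finset.add_sum_erase Finset.univ _ (Finset.mem_univ i0), hi0, zero_add]
  _ ≤ ∑ i ∈ Finset.univ.erase i0, 1 :=
      Finset.sum_le_sum fun i _ => aux_eigen_le_one hA.1 h1 i
  _ = ((Finset.univ.erase i0).card : ℝ) := by simp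
  _ = (Fintype.card m : ℝ) - 1 := by
      rw [Finset.card_erase_of_mem (Finset.mem_univ i0), Finset.card_univ,
        Nat.cast_sub hcard, Nat.cast_one]

end Spectral

section Main

variable [Fintype V] [DecidableEq V]

lemma aux_quad_apply {ι : Type*} [Fintype ι] (N : Matrix V V ℝ)
    (M : Matrix ι V ℝ) (k l : ι) :
    (M * N * Mᵀ) k l = (M k) ⬝ᵥ (N *ᵥ (M l)) := by
  simp only [Matrix.mul_apply, Matrix.transpose_apply, dotProduct, Matrix.mulVec,
    Finset.sum_mul, Finset.mul_sum]
  rw [Finset.sum_comm]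
  apply Finset.sum_congr rfl; intro i _
  apply Finset.sum_congr rfl; intro j _
  ring

lemma aux_tele {G : SimpleGraph V} {a bb : V} (p : G.Walk a bb) :
    ((p.darts.map (fun dd => (Pi.single dd.toProd.1 1 - Pi.single dd.toProd.2 1 : V → ℝ))).sum)
      = (Pi.single a 1 - Pi.single bb 1 : V → ℝ) := by
  induction p with
  | nil => simp
  | cons h q ih =>
    simp only [SimpleGraph.Walk.darts_cons, List.map_cons, List.sum_cons, ih]
    abel

theorem cycle_relative_resistance_upper_bound'
    (G : SimpleGraph V) [DecidableRel G.Adj]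
    (c : V → V → ℝ) (hsymm : ∀ i j, c i j = c j i)
    (hpos : ∀ i j, G.Adj i j → 0 < c i j)
    (hconn : G.Connected)
    (Qd : Matrix V V ℝ) (hQd : IsMoorePenroseInv (lapMatrix G c) Qd)
    (v : V) (w : G.Walk v v) (hw : w.IsCycle) :
    ∑ e ∈ w.edges.toFinset, relResEdge c hsymm Qd e ≤
      (w.edges.toFinset.card : ℝ) - 1 := by
  classical
  set Q := lapMatrix G c with hQdef
  obtain ⟨hQ1, hQ2, hQ3, hQ4⟩ := hQd
  have hQT : Qᵀ = Q := aux_lap_transpose G c hsymm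
  have hQpsd : Q.PosSemidef := aux_lap_psd G c hsymm hpos
  -- the pseudoinverse is symmetric
  have hQdT : Qdᵀ = Qd := by
    refine aux_mp_unique Q Qdᵀ Qd ⟨?_, ?_, ?_, ?_⟩ ⟨hQ1, hQ2, hQ3, hQ4⟩
    · have key := congrArg Matrix.transpose hQ1
      rw [Matrix.transpose_mul, Matrix.transpose_mul, hQT] at key
      rw [← mul_assoc] at key
      exact key
    · have key := congrArg Matrix.transpose hQ2
      rw [Matrix.transpose_mul, Matrix.transpose_mul, hQT] at key
      rw [← mul_assoc] at key
      exact key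
    · have hc : Q * Qdᵀ = (Qd * Q)ᵀ := by rw [Matrix.transpose_mul, hQT]
      rw [hc, Matrix.transpose_transpose]
      exact hQ4.symm
    · have hd : Qdᵀ * Q = (Q * Qd)ᵀ := by rw [Matrix.transpose_mul, hQT]
      rw [hd, Matrix.transpose_transpose]
      exact hQ3.symm
  have hQdH : Qdᴴ = Qd := by
    have h1 : Qdᴴ = Qdᵀ := by
      ext i j
      show star (Qd j i) = Qd j i
      exact star_trivial _
    rw [h1, hQdT]
  have hQdpsd : Qd.PosSemidef := by
    have := hQpsd.mul_mul_conjTranspose_same Qd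
    rwa [hQdH, hQ2] at this
  -- walk data
  have hnodup : w.edges.Nodup := hw.edges_nodup
  have hnd : w.darts.Nodup :=
    List.Nodup.of_map SimpleGraph.Dart.edge (by simpa [SimpleGraph.Walk.edges] using hnodup)
  set d : Fin w.darts.length → G.Dart := fun k => w.darts.get k with hd_def
  set γ : Fin w.darts.length → ℝ := fun k => c (d k).toProd.1 (d k).toProd.2 with hγ_def
  have hγ : ∀ k, 0 < γ k := fun k => hpos _ _ (d k).adj
  set b : Fin w.darts.length → V → ℝ :=
    fun k => (Pi.single (d k).toProd.1 1 - Pi.single (d k).toProd.2 1) with hb_def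
  set M : Matrix (Fin w.darts.length) V ℝ :=
    Matrix.of fun k i => Real.sqrt (γ k) * b k i with hM_def
  set A : Matrix (Fin w.darts.length) (Fin w.darts.length) ℝ := M * Qd * Mᵀ with hA_def
  -- the diagonal of A
  have hAdiag : ∀ k, A k k = γ k * (b k ⬝ᵥ Qd *ᵥ b k) := by
    intro k
    rw [hA_def, aux_quad_apply]
    have hrow : (M k : V → ℝ) = Real.sqrt (γ k) • b k := by
      funext i; simp [hM_def]
    rw [hrow, smul_dotProduct, Matrix.mulVec_smul, dotProduct_smul,
      smul_eq_mul, smul_eq_mul, ← mul_assoc, Real.mul_self_sqrt (hγ k).le]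
  -- relating the sum over edges to the trace of A
  have hsum : ∑ e ∈ w.edges.toFinset, relResEdge c hsymm Qd e = ∑ k, A k k := by
    rw [List.sum_toFinset _ hnodup]
    have hmm : w.edges.map (relResEdge c hsymm Qd)
        = w.darts.map (fun dd => relResEdge c hsymm Qd dd.edge) := by
      rw [SimpleGraph.Walk.edges, List.map_map]
      rfl
    rw [hmm, ← Fin.sum_univ_fun_getElem]
    apply Finset.sum_congr rfl
    intro k _
    rw [hAdiag k]
    have hedge : (w.darts[(k : ℕ)]).edge = s((d k).toProd.1, (d k).toProd.2) := rfl
    rw [hedge]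
    show c (d k).toProd.1 (d k).toProd.2 * effRes Qd (d k).toProd.1 (d k).toProd.2
        = γ k * (b k ⬝ᵥ Qd *ᵥ b k)
    have heff : effRes Qd (d k).toProd.1 (d k).toProd.2 = b k ⬝ᵥ Qd *ᵥ b k := by
      unfold effRes
      rw [hb_def]
      congr!
    rw [heff, hγ_def]
  have hcard : w.edges.toFinset.card = w.darts.length := by
    rw [List.toFinset_card_of_nodup hnodup, SimpleGraph.Walk.length_edges,
      ← SimpleGraph.Walk.length_darts]
  -- the key quadratic form inequality (the cycle edges are a sub-collection of all edges)
  have hMv : ∀ (p : V → ℝ) k, (M *ᵥ p) k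
      = Real.sqrt (γ k) * (p (d k).toProd.1 - p (d k).toProd.2) := by
    intro p k
    have h1 : (M *ᵥ p) k = Real.sqrt (γ k) * (b k ⬝ᵥ p) := by
      simp [hM_def, Matrix.mulVec, dotProduct, Finset.mul_sum, mul_assoc]
    rw [h1]
    congr 1
    simp [hb_def, sub_dotProduct, single_dotProduct]
  have hMQ : ∀ p : V → ℝ, (M *ᵥ p) ⬝ᵥ (M *ᵥ p) ≤ p ⬝ᵥ (Q *ᵥ p) := by
    intro p
    rw [hQdef, aux_lap_qf G c hsymm p]
    have hL : (M *ᵥ p) ⬝ᵥ (M *ᵥ p)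
        = ∑ k, γ k * (p (d k).toProd.1 - p (d k).toProd.2)^2 := by
      simp only [dotProduct]
      apply Finset.sum_congr rfl; intro k _
      rw [hMv p k, mul_mul_mul_comm, Real.mul_self_sqrt (hγ k).le, ← pow_two]
    rw [hL]
    set g : V × V → ℝ := fun q => if G.Adj q.1 q.2 then c q.1 q.2 * (p q.1 - p q.2)^2 else 0
      with hg
    set φ : Fin w.darts.length × Bool → V × V :=
      fun q => cond q.2 ((d q.1).toProd.2, (d q.1).toProd.1) (d q.1).toProd with hφ
    have hφg : ∀ q, g (φ q) = γ q.1 * (p (d q.1).toProd.1 - p (d q.1).toProd.2)^2 := by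
      rintro ⟨k, bo⟩
      cases bo
      · simp only [hφ, cond_false, hg]
        rw [if_pos (d k).adj]
      · simp only [hφ, cond_true, hg]
        rw [if_pos (d k).adj.symm, hsymm]
        ring
    have hdinj : Function.Injective d := by
      intro k l hkl
      exact hnd.get_inj_iff.mp hkl
    have hlenE : w.edges.length = w.darts.length := by
      simp [SimpleGraph.Walk.edges]
    have hedge_inj : Function.Injective (fun k => (d k).edge) := by
      intro k l hkl
      have hkl' : (d k).edge = (d l).edge := hkl
      have h1 : w.edges.get (Fin.cast hlenE.symm k) = (d k).edge := by
        show (w.darts.map SimpleGraph.Dart.edge).get _ = _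
        simp [hd_def, List.get_eq_getElem, List.getElem_map]
        exact List.getElem_map _
      have h2 : w.edges.get (Fin.cast hlenE.symm l) = (d l).edge := by
        show (w.darts.map SimpleGraph.Dart.edge).get _ = _
        simp [hd_def, List.get_eq_getElem, List.getElem_map]
        exact List.getElem_map _
      have h3 : Fin.cast hlenE.symm k = Fin.cast hlenE.symm l :=
        hnodup.get_inj_iff.mp (h1.trans (hkl'.trans h2.symm))
      exact Fin.ext (by simpa using congrArg Fin.val h3)
    have hφinj : Function.Injective φ := by
      rintro ⟨k, bk⟩ ⟨l, bl⟩ hkl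
      cases bk <;> cases bl <;> simp only [hφ, cond_false, cond_true] at hkl
      · have : d k = d l := SimpleGraph.Dart.ext _ _ hkl
        rw [hdinj this]
      · exfalso
        have hedge : (d k).edge = (d l).edge := by
          show Quot.mk (Sym2.Rel V) (d k).toProd = Quot.mk (Sym2.Rel V) (d l).toProd
          rw [hkl]
          exact (Sym2.eq_swap (a := (d l).toProd.2) (b := (d l).toProd.1)).trans (by simp)
        have hkl' : k = l := hedge_inj hedge
        subst hkl'
        have : (d k).toProd.1 = (d k).toProd.2 := by
          have := congrArg Prod.fst hkl
          have h2 := congrArg Prod.snd hkl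
          exact ((d k).adj.ne (by simpa using this)).elim
        exact (d k).adj.ne this
      · exfalso
        have hedge : (d k).edge = (d l).edge := by
          show Quot.mk (Sym2.Rel V) (d k).toProd = Quot.mk (Sym2.Rel V) (d l).toProd
          rw [← hkl]
          exact ((Sym2.eq_swap (a := (d k).toProd.2) (b := (d k).toProd.1)).trans (by simp)).symm
        have hkl' : k = l := hedge_inj hedge
        subst hkl'
        have := congrArg Prod.fst hkl
        exact (d k).adj.ne (by simpa using this.symm)
      · have hp1 : (d k).toProd.1 = (d l).toProd.1 := by
          have := congrArg Prod.snd hkl; simpa using this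
        have hp2 : (d k).toProd.2 = (d l).toProd.2 := by
          have := congrArg Prod.fst hkl; simpa using this
        have : d k = d l := SimpleGraph.Dart.ext _ _ (Prod.ext hp1 hp2)
        rw [hdinj this]
    calc ∑ k, γ k * (p (d k).toProd.1 - p (d k).toProd.2)^2
        = (∑ q : Fin w.darts.length × Bool, g (φ q)) / 2 := by
          have hbool : ∀ k, ∑ bo : Bool, g (φ (k, bo))
              = 2 * (γ k * (p (d k).toProd.1 - p (d k).toProd.2)^2) := by
            intro k
            rw [Fintype.sum_bool, hφg (k, true), hφg (k, false)]
            ring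
          rw [Fintype.sum_prod_type]
          simp_rw [hbool]
          rw [← Finset.mul_sum]
          ring
      _ ≤ (∑ q : V × V, g q) / 2 := by
          gcongr
          rw [← Finset.sum_image (f := g) (g := φ) (s := Finset.univ)
            (fun x _ y _ h => hφinj h)]
          apply Finset.sum_le_sum_of_subset_of_nonneg (Finset.subset_univ _)
          intro y _ _
          rw [hg]
          dsimp only
          split_ifs with h
          · exact mul_nonneg (hpos _ _ h).le (sq_nonneg _)
          · exact le_refl 0
      _ = (∑ i, ∑ j, if G.Adj i j then c i j * (p i - p j)^2 else 0) / 2 := by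
          congr 1
          rw [Fintype.sum_prod_type]
  -- A is PSD
  have hApsd : A.PosSemidef := by
    have hMH : Mᴴ = Mᵀ := by
      ext i j
      show star (M j i) = M j i
      exact star_trivial _
    have := hQdpsd.mul_mul_conjTranspose_same M
    rwa [hMH] at this
  -- A ⪯ 1
  have hA2 : ∀ z, (A *ᵥ z) ⬝ᵥ (A *ᵥ z) ≤ z ⬝ᵥ (A *ᵥ z) := by
    intro z
    have hAz : A *ᵥ z = M *ᵥ (Qd *ᵥ (Mᵀ *ᵥ z)) := by
      rw [hA_def, Matrix.mulVec_mulVec, Matrix.mulVec_mulVec]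
    set u := Mᵀ *ᵥ z with hu
    set p := Qd *ᵥ u with hp
    have h1 : (A *ᵥ z) ⬝ᵥ (A *ᵥ z) ≤ p ⬝ᵥ (Q *ᵥ p) := by rw [hAz]; exact hMQ p
    have hQdu : Qd *ᵥ u = u ᵥ* Qd := by
      conv_rhs => rw [← hQdT]
      rw [Matrix.vecMul_transpose]
    have e0 : p ⬝ᵥ (Q *ᵥ p) = u ⬝ᵥ (Qd *ᵥ u) := by
      rw [hp, hQdu, ← Matrix.dotProduct_mulVec, ← hQdu, Matrix.mulVec_mulVec,
        Matrix.mulVec_mulVec, hQ2]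
    have e2 : z ⬝ᵥ (A *ᵥ z) = u ⬝ᵥ (Qd *ᵥ u) := by
      rw [hAz, Matrix.dotProduct_mulVec, ← Matrix.mulVec_transpose, ← hu]
    rw [e2, ← e0]
    exact h1.trans (le_of_eq rfl)
  have h1psd : ((1 : Matrix (Fin w.darts.length) (Fin w.darts.length) ℝ) - A).PosSemidef :=
    aux_one_sub_psd hApsd hA2
  -- the kernel vector
  have hlen3 : 3 ≤ w.length := hw.three_le_length
  have hdl : w.darts.length = w.length := SimpleGraph.Walk.length_darts w
  have hpos' : 0 < w.darts.length := by omega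
  set z0 : Fin w.darts.length → ℝ := fun k => (Real.sqrt (γ k))⁻¹ with hz0_def
  have hsqne : ∀ k, Real.sqrt (γ k) ≠ 0 := fun k => ne_of_gt (Real.sqrt_pos.mpr (hγ k))
  have hz0ne : z0 ≠ 0 := by
    intro h0
    have := congrFun h0 ⟨0, hpos'⟩
    rw [hz0_def] at this
    simp only [Pi.zero_apply, inv_eq_zero] at this
    exact hsqne _ this
  have hMTz0 : Mᵀ *ᵥ z0 = 0 := by
    funext i
    have h1 : (Mᵀ *ᵥ z0) i = ∑ k, b k i := by
      simp only [Matrix.mulVec, dotProduct, Matrix.transpose_apply, hM_def,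
        Matrix.of_apply, hz0_def]
      apply Finset.sum_congr rfl; intro k _
      rw [mul_comm (Real.sqrt (γ k)) (b k i), mul_assoc,
        mul_inv_cancel₀ (hsqne k), mul_one]
    have h3 : (∑ k : Fin w.darts.length, b k) = 0 := by
      have htl := aux_tele w
      have hgs : (∑ k : Fin w.darts.length, b k)
          = (w.darts.map (fun dd => (Pi.single dd.toProd.1 (1:ℝ)
              - Pi.single dd.toProd.2 1))).sum := by
        rw [← Fin.sum_univ_fun_getElem]
        apply Finset.sum_congr rfl
        intro k _
        simp [hb_def, hd_def, List.get_eq_getElem]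
      rw [hgs, htl, sub_self]
    have h2 : ∑ k, b k i = (0 : ℝ) := by
      rw [← Finset.sum_apply i Finset.univ b]
      rw [h3]
      rfl
    rw [h1, h2]
    rfl
  have hAz0 : A *ᵥ z0 = 0 := by
    rw [hA_def, ← Matrix.mulVec_mulVec, hMTz0, Matrix.mulVec_zero]
  -- conclusion
  have htr := aux_trace_le hApsd h1psd z0 hz0ne hAz0
  rw [hsum]
  have hcast : (w.edges.toFinset.card : ℝ)
      = (Fintype.card (Fin w.darts.length) : ℝ) := by
    rw [hcard]; simp
  rw [hcast]
  calc ∑ k, A k k = A.trace := by simp [Matrix.trace, Matrix.diag]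
  _ ≤ _ := htr

end Main

/- STATEMENT 5: for a connected graph and any cycle with link set `H`, the sum of
the relative resistances over the cycle is at most `|H| - 1`. -/
theorem cycle_relative_resistance_upper_bound
    [Fintype V] [DecidableEq V] (G : SimpleGraph V) [DecidableRel G.Adj]
    (c : V → V → ℝ) (hsymm : ∀ i j, c i j = c j i)
    (hpos : ∀ i j, G.Adj i j → 0 < c i j)
    (hconn : G.Connected)
    (Qd : Matrix V V ℝ) (hQd : IsMoorePenroseInv (lapMatrix G c) Qd)
    (v : V) (w : G.Walk v v) (hw : w.IsCycle) :
    ∑ e ∈ w.edges.toFinset, relResEdge c hsymm Qd e ≤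
      (w.edges.toFinset.card : ℝ) - 1 :=
  cycle_relative_resistance_upper_bound' G c hsymm hpos hconn Qd hQd v w hw
end

section
/- For any link (i,j) of a weighted graph, the link resistance curvature satisfies (4 − d_i − d_j)/ω_ij ≤ κ_ij ≤ 2/ω_ij, with equality in the lower bound if and only if all links incident to i and to j are cut links. -/
open Matrix

variable {V : Type*}

/- The node resistance curvature `p i = 1 - (1/2) ∑_{j ∼ i} c i j * ω i j`. -/
open Classical in
noncomputable def nodeCurv [Fintype V] (G : SimpleGraph V) (c : V → V → ℝ)
    (Qd : Matrix V V ℝ) (i : V) : ℝ :=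
  1 - 1 / 2 * ∑ j, if G.Adj i j then c i j * effRes Qd i j else 0

/- The link resistance curvature `κ i j = 2 (p i + p j) / ω i j`. -/
noncomputable def linkCurv [Fintype V] (G : SimpleGraph V) (c : V → V → ℝ)
    (Qd : Matrix V V ℝ) (i j : V) : ℝ :=
  2 * (nodeCurv G c Qd i + nodeCurv G c Qd j) / effRes Qd i j

/- A link is a cut link (bridge) if its removal increases the number of
connected components of the graph. -/
def IsCutLink (G : SimpleGraph V) (i j : V) : Prop :=
  G.Adj i j ∧
    Nat.card G.ConnectedComponent <
      Nat.card (G.deleteEdges {s(i, j)}).ConnectedComponent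

/-! ### Auxiliary lemmas -/

section Aux

set_option linter.unusedSectionVars false

open Classical

variable [Fintype V] [DecidableEq V]

/-- Uniqueness of the Moore–Penrose pseudoinverse. -/
lemma mp_unique {Q B C : Matrix V V ℝ} (hB : IsMoorePenroseInv Q B)
    (hC : IsMoorePenroseInv Q C) : B = C := by
  obtain ⟨hB1, hB2, hB3, hB4⟩ := hB
  obtain ⟨hC1, hC2, hC3, hC4⟩ := hC
  have tB : Bᵀ * Qᵀ = Q * B := by rw [← Matrix.transpose_mul, hB3]
  have tC : Cᵀ * Qᵀ = Q * C := by rw [← Matrix.transpose_mul, hC3]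
  have tB' : Qᵀ * Bᵀ = B * Q := by rw [← Matrix.transpose_mul, hB4]
  have tC' : Qᵀ * Cᵀ = C * Q := by rw [← Matrix.transpose_mul, hC4]
  have hQB : Q * B = Q * C := by
    calc Q * B = Bᵀ * Qᵀ := tB.symm
      _ = Bᵀ * (Q * C * Q)ᵀ := by rw [hC1]
      _ = Bᵀ * (Qᵀ * (Cᵀ * Qᵀ)) := by simp only [Matrix.transpose_mul, Matrix.mul_assoc]
      _ = (Bᵀ * Qᵀ) * (Cᵀ * Qᵀ) := by rw [Matrix.mul_assoc]
      _ = (Q * B) * (Q * C) := by rw [tB, tC]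
      _ = (Q * B * Q) * C := (Matrix.mul_assoc (Q * B) Q C).symm
      _ = Q * C := by rw [hB1]
  have hBQ : B * Q = C * Q := by
    calc B * Q = Qᵀ * Bᵀ := tB'.symm
      _ = (Q * C * Q)ᵀ * Bᵀ := by rw [hC1]
      _ = Qᵀ * (Cᵀ * (Qᵀ * Bᵀ)) := by simp only [Matrix.transpose_mul, Matrix.mul_assoc]
      _ = Qᵀ * (Cᵀ * (B * Q)) := by rw [tB']
      _ = (Qᵀ * Cᵀ) * (B * Q) := by rw [Matrix.mul_assoc]
      _ = (C * Q) * (B * Q) := by rw [tC']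
      _ = C * (Q * B * Q) := by rw [Matrix.mul_assoc C Q (B * Q), ← Matrix.mul_assoc Q B Q]
      _ = C * Q := by rw [hB1]
  calc B = B * Q * B := hB2.symm
    _ = B * (Q * C) := by rw [Matrix.mul_assoc, hQB]
    _ = (B * Q) * C := (Matrix.mul_assoc B Q C).symm
    _ = (C * Q) * C := by rw [hBQ]
    _ = C := hC2

lemma lap_apply (G : SimpleGraph V) (c : V → V → ℝ) (u v : V) :
    lapMatrix G c u v =
      (if u = v then ∑ k, if G.Adj u k then c u k else 0 else 0)
        - (if G.Adj u v then c u v else 0) := by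
  by_cases h : u = v
  · subst h
    simp [lapMatrix]
  · simp [lapMatrix, h]
    by_cases h2 : G.Adj u v <;> simp [h2]

lemma lap_symm (G : SimpleGraph V) (c : V → V → ℝ) (hsymm : ∀ i j, c i j = c j i) :
    (lapMatrix G c)ᵀ = lapMatrix G c := by
  ext u v
  rw [Matrix.transpose_apply, lap_apply, lap_apply]
  have hadj : G.Adj v u ↔ G.Adj u v := G.adj_comm v u
  by_cases h : u = v
  · subst h; rfl
  · have h' : ¬ v = u := fun hh => h hh.symm
    simp only [h, h', if_false]
    by_cases h2 : G.Adj u v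
    · rw [if_pos h2, if_pos (hadj.mpr h2), hsymm]
    · rw [if_neg h2, if_neg (fun hh => h2 (hadj.mp hh))]

/-- The quadratic form of the Laplacian. -/
lemma lap_quadform (G : SimpleGraph V) (c : V → V → ℝ) (hsymm : ∀ i j, c i j = c j i)
    (x : V → ℝ) :
    x ⬝ᵥ lapMatrix G c *ᵥ x =
      1 / 2 * ∑ u, ∑ v, (if G.Adj u v then c u v * (x u - x v) ^ 2 else 0) := by
  classical
  set a : V → V → ℝ := fun u v => if G.Adj u v then c u v else 0 with ha
  have ha_symm : ∀ u v, a u v = a v u := by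
    intro u v
    by_cases h : G.Adj u v
    · simp only [ha, if_pos h, if_pos (G.adj_comm u v |>.mp h), hsymm u v]
    · simp only [ha, if_neg h, if_neg (fun hh => h ((G.adj_comm v u).mp hh))]
  have hQ : ∀ u v, lapMatrix G c u v = (if u = v then ∑ k, a u k else 0) - a u v :=
    lap_apply G c
  have hLHS : x ⬝ᵥ lapMatrix G c *ᵥ x
      = ∑ u, ∑ v, (a u v * (x u)^2) - ∑ u, ∑ v, (a u v * (x u * x v)) := by
    rw [dotProduct, ← Finset.sum_sub_distrib]
    apply Finset.sum_congr rfl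
    intro u _
    rw [mulVec, dotProduct]
    have : ∀ v, lapMatrix G c u v * x v
        = (if u = v then ∑ k, a u k else 0) * x v - a u v * x v := by
      intro v; rw [hQ u v, sub_mul]
    calc x u * ∑ v, lapMatrix G c u v * x v
        = ∑ v, x u * (((if u = v then ∑ k, a u k else 0) * x v) - a u v * x v) := by
          rw [Finset.mul_sum]; exact Finset.sum_congr rfl fun v _ => by rw [this v]
      _ = (∑ v, x u * ((if u = v then ∑ k, a u k else 0) * x v))
            - ∑ v, x u * (a u v * x v) := by
          rw [← Finset.sum_sub_distrib]; exact Finset.sum_congr rfl fun v _ => by ring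
      _ = ∑ v, (a u v * (x u)^2) - ∑ v, (a u v * (x u * x v)) := by
          congr 1
          · have : ∀ v ∈ Finset.univ,
                x u * ((if u = v then ∑ k, a u k else 0) * x v)
                  = if u = v then (∑ k, a u k) * (x u)^2 else 0 := by
              intro v _
              by_cases h : u = v
              · subst h; simp; ring
              · simp [h]
            rw [Finset.sum_congr rfl this, Finset.sum_ite_eq, if_pos (Finset.mem_univ u),
              Finset.sum_mul]
          · exact Finset.sum_congr rfl fun v _ => by ring
  have hswap : ∑ u, ∑ v, (a u v * (x v)^2) = ∑ u, ∑ v, (a u v * (x u)^2) := by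
    rw [Finset.sum_comm]
    exact Finset.sum_congr rfl fun u _ => Finset.sum_congr rfl fun v _ => by
      rw [ha_symm u v]
  have hRHS : ∑ u, ∑ v, (if G.Adj u v then c u v * (x u - x v) ^ 2 else 0)
      = ∑ u, ∑ v, (a u v * (x u)^2) + ∑ u, ∑ v, (a u v * (x v)^2)
        - 2 * ∑ u, ∑ v, (a u v * (x u * x v)) := by
    have : ∀ u v, (if G.Adj u v then c u v * (x u - x v) ^ 2 else 0)
        = a u v * (x u)^2 + a u v * (x v)^2 - 2 * (a u v * (x u * x v)) := by
      intro u v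
      by_cases h : G.Adj u v
      · simp only [ha, if_pos h]; ring
      · simp only [ha, if_neg h]; ring
    calc ∑ u, ∑ v, (if G.Adj u v then c u v * (x u - x v) ^ 2 else 0)
        = ∑ u, ∑ v, (a u v * (x u)^2 + a u v * (x v)^2 - 2 * (a u v * (x u * x v))) := by
          exact Finset.sum_congr rfl fun u _ => Finset.sum_congr rfl fun v _ => this u v
      _ = _ := by
          simp only [Finset.sum_sub_distrib, Finset.sum_add_distrib, ← Finset.mul_sum]
  rw [hLHS, hRHS, hswap]; ring

lemma quad_term_nonneg (G : SimpleGraph V) (c : V → V → ℝ)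
    (hpos : ∀ i j, G.Adj i j → 0 < c i j) (x : V → ℝ) (u v : V) :
    0 ≤ (if G.Adj u v then c u v * (x u - x v) ^ 2 else 0) := by
  by_cases h : G.Adj u v
  · rw [if_pos h]; exact mul_nonneg (hpos u v h).le (sq_nonneg _)
  · rw [if_neg h]

lemma lap_quad_nonneg (G : SimpleGraph V) (c : V → V → ℝ)
    (hsymm : ∀ i j, c i j = c j i) (hpos : ∀ i j, G.Adj i j → 0 < c i j) (x : V → ℝ) :
    0 ≤ x ⬝ᵥ lapMatrix G c *ᵥ x := by
  rw [lap_quadform G c hsymm x]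
  have : 0 ≤ ∑ u, ∑ v, (if G.Adj u v then c u v * (x u - x v) ^ 2 else 0) :=
    Finset.sum_nonneg fun u _ => Finset.sum_nonneg fun v _ =>
      quad_term_nonneg G c hpos x u v
  linarith

/-- Vectors in the kernel of the Laplacian are constant across edges. -/
lemma lap_ker_const (G : SimpleGraph V) (c : V → V → ℝ)
    (hsymm : ∀ i j, c i j = c j i) (hpos : ∀ i j, G.Adj i j → 0 < c i j)
    (w : V → ℝ) (hw : lapMatrix G c *ᵥ w = 0) :
    ∀ u v, G.Adj u v → w u = w v := by
  intro u v huv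
  have h0 : w ⬝ᵥ lapMatrix G c *ᵥ w = 0 := by rw [hw, dotProduct_zero]
  rw [lap_quadform G c hsymm w] at h0
  have hsum : ∑ u, ∑ v, (if G.Adj u v then c u v * (w u - w v) ^ 2 else 0) = 0 := by
    linarith
  have h1 : ∀ p ∈ Finset.univ,
      (∑ q, if G.Adj p q then c p q * (w p - w q) ^ 2 else 0) = 0 := by
    rw [← Finset.sum_eq_zero_iff_of_nonneg]
    · exact hsum
    · exact fun p _ => Finset.sum_nonneg fun q _ => quad_term_nonneg G c hpos w p q
  have h2 : ∀ q ∈ Finset.univ, (if G.Adj u q then c u q * (w u - w q) ^ 2 else 0) = 0 := by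
    rw [← Finset.sum_eq_zero_iff_of_nonneg]
    · exact h1 u (Finset.mem_univ u)
    · exact fun q _ => quad_term_nonneg G c hpos w u q
  have h3 := h2 v (Finset.mem_univ v)
  rw [if_pos huv] at h3
  have hc := hpos u v huv
  have : (w u - w v) ^ 2 = 0 := by
    rcases mul_eq_zero.mp h3 with h | h
    · exact absurd h hc.ne'
    · exact h
  have := pow_eq_zero_iff (n := 2) (by norm_num) |>.mp this
  linarith


/-- Cauchy–Schwarz for a positive semidefinite symmetric quadratic form. -/
lemma cs_psd (Q : Matrix V V ℝ) (hQt : Qᵀ = Q) (hpsd : ∀ x : V → ℝ, 0 ≤ x ⬝ᵥ Q *ᵥ x)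
    (w y : V → ℝ) : (w ⬝ᵥ Q *ᵥ y) ^ 2 ≤ (w ⬝ᵥ Q *ᵥ w) * (y ⬝ᵥ Q *ᵥ y) := by
  have hsym : ∀ p q : V → ℝ, p ⬝ᵥ Q *ᵥ q = q ⬝ᵥ Q *ᵥ p := by
    intro p q
    rw [dotProduct_mulVec, ← mulVec_transpose, hQt, dotProduct_comm]
  have key : ∀ t : ℝ, 0 ≤ (y ⬝ᵥ Q *ᵥ y) * (t * t) + (2 * (w ⬝ᵥ Q *ᵥ y)) * t
      + (w ⬝ᵥ Q *ᵥ w) := by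
    intro t
    have h := hpsd (w + t • y)
    have hexp : (w + t • y) ⬝ᵥ Q *ᵥ (w + t • y)
        = (y ⬝ᵥ Q *ᵥ y) * (t * t) + (2 * (w ⬝ᵥ Q *ᵥ y)) * t + (w ⬝ᵥ Q *ᵥ w) := by
      simp only [mulVec_add, mulVec_smul, dotProduct_add, add_dotProduct,
        dotProduct_smul, smul_dotProduct, smul_eq_mul]
      rw [hsym y w]
      ring
    rw [hexp] at h
    exact h
  have hd := discrim_le_zero key
  rw [discrim] at hd
  nlinarith [hd]

variable (G : SimpleGraph V) (c : V → V → ℝ)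

/-- The pseudoinverse of the (symmetric) Laplacian is symmetric. -/
lemma Qd_symm (hsymm : ∀ i j, c i j = c j i) {Qd : Matrix V V ℝ}
    (hQd : IsMoorePenroseInv (lapMatrix G c) Qd) : Qdᵀ = Qd := by
  set Q := lapMatrix G c with hQ
  have hQt : Qᵀ = Q := lap_symm G c hsymm
  obtain ⟨h1, h2, h3, h4⟩ := hQd
  have hT : IsMoorePenroseInv Q Qdᵀ := by
    refine ⟨?_, ?_, ?_, ?_⟩
    · have := congrArg Matrix.transpose h1
      simpa [Matrix.transpose_mul, hQt, Matrix.mul_assoc] using this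
    · have := congrArg Matrix.transpose h2
      simpa [Matrix.transpose_mul, hQt, Matrix.mul_assoc] using this
    · have e1 : Q * Qdᵀ = Qd * Q := by
        calc Q * Qdᵀ = (Qd * Q)ᵀ := by rw [Matrix.transpose_mul, hQt]
          _ = Qd * Q := h4
      rw [e1]; exact h4
    · have e2 : Qdᵀ * Q = Q * Qd := by
        calc Qdᵀ * Q = (Q * Qd)ᵀ := by rw [Matrix.transpose_mul, hQt]
          _ = Q * Qd := h3
      rw [e2]; exact h3
  exact mp_unique hT ⟨h1, h2, h3, h4⟩

/-- For adjacent `i j`, `e_i - e_j` lies in the range of the Laplacian: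
`Q (Qd (e_i - e_j)) = e_i - e_j`. -/
lemma range_fact (hsymm : ∀ i j, c i j = c j i) (hpos : ∀ i j, G.Adj i j → 0 < c i j)
    {Qd : Matrix V V ℝ} (hQd : IsMoorePenroseInv (lapMatrix G c) Qd)
    {i j : V} (hij : G.Adj i j) :
    lapMatrix G c *ᵥ (Qd *ᵥ (Pi.single i 1 - Pi.single j 1))
      = Pi.single i 1 - Pi.single j 1 := by
  set Q := lapMatrix G c with hQdef
  have hQt : Qᵀ = Q := lap_symm G c hsymm
  have hQdt : Qdᵀ = Qd := Qd_symm G c hsymm hQd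
  obtain ⟨h1, h2, h3, h4⟩ := hQd
  set x : V → ℝ := Pi.single i 1 - Pi.single j 1 with hx
  set P : Matrix V V ℝ := Qd * Q with hP
  have hPt : Pᵀ = P := h4
  have hPP : P * P = P := by
    rw [hP, Matrix.mul_assoc, ← Matrix.mul_assoc Q Qd Q, h1]
  set v : V → ℝ := x - P *ᵥ x with hv
  have hQv : Q *ᵥ v = 0 := by
    rw [hv, mulVec_sub, mulVec_mulVec, ← Matrix.mul_assoc, h1, sub_self]
  have hconst : v i = v j := lap_ker_const G c hsymm hpos v hQv i j hij
  have hPv : P *ᵥ v = 0 := by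
    rw [hv, mulVec_sub, mulVec_mulVec, hPP, sub_self]
  have hvx : v ⬝ᵥ x = 0 := by
    have : v ⬝ᵥ x = v i - v j := by
      rw [hx, dotProduct_sub, dotProduct_single, dotProduct_single]
      ring
    rw [this, hconst, sub_self]
  have hvv : v ⬝ᵥ v = 0 := by
    have : v ⬝ᵥ v = v ⬝ᵥ x - v ⬝ᵥ (P *ᵥ x) := by rw [hv, dotProduct_sub]
    rw [this, hvx]
    have : v ⬝ᵥ (P *ᵥ x) = (P *ᵥ v) ⬝ᵥ x := by
      rw [dotProduct_mulVec, ← mulVec_transpose, hPt]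
    rw [this, hPv, zero_dotProduct, sub_self]
  have hv0 : v = 0 := dotProduct_self_eq_zero.mp hvv
  have hPx : P *ᵥ x = x := by
    have := sub_eq_zero.mp (hv.symm.trans (by rw [hv0]) : x - P *ᵥ x = 0)
    -- this : x = P *ᵥ x
    exact this.symm
  calc Q *ᵥ (Qd *ᵥ x) = (Q * Qd) *ᵥ x := by rw [mulVec_mulVec]
    _ = P *ᵥ x := by
        have : Q * Qd = P := by
          calc Q * Qd = (Qd * Q)ᵀ := by rw [Matrix.transpose_mul, hQt, hQdt]
            _ = Qd * Q := h4
            _ = P := hP.symm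
        rw [this]
    _ = x := hPx

lemma effRes_def (Qd : Matrix V V ℝ) (u v : V) :
    effRes Qd u v
      = (Pi.single u 1 - Pi.single v 1) ⬝ᵥ Qd *ᵥ (Pi.single u 1 - Pi.single v 1) := by
  unfold effRes
  congr!

/-- Cauchy–Schwarz applied to the effective resistance: for any potential `w`,
`(w u - w v)² ≤ (wᵀ Q w) * ω(u,v)`. -/
lemma cs_effRes (hsymm : ∀ i j, c i j = c j i) (hpos : ∀ i j, G.Adj i j → 0 < c i j)
    {Qd : Matrix V V ℝ} (hQd : IsMoorePenroseInv (lapMatrix G c) Qd)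
    {u v : V} (huv : G.Adj u v) (w : V → ℝ) :
    (w u - w v) ^ 2 ≤ (w ⬝ᵥ lapMatrix G c *ᵥ w) * effRes Qd u v := by
  set Q := lapMatrix G c with hQdef
  set x : V → ℝ := Pi.single u 1 - Pi.single v 1 with hx
  set y : V → ℝ := Qd *ᵥ x with hy
  have hyx : Q *ᵥ y = x := range_fact G c hsymm hpos hQd huv
  have h1 : w ⬝ᵥ Q *ᵥ y = w u - w v := by
    rw [hyx, hx, dotProduct_sub, dotProduct_single, dotProduct_single]
    ring
  have h2 : y ⬝ᵥ Q *ᵥ y = effRes Qd u v := by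
    rw [hyx, dotProduct_comm, effRes_def]
  have hcs := cs_psd Q (lap_symm G c hsymm) (lap_quad_nonneg G c hsymm hpos) w y
  rw [h1, h2] at hcs
  exact hcs

/-- The weighted degree is positive at an endpoint of a link. -/
lemma wdeg_pos (hpos : ∀ i j, G.Adj i j → 0 < c i j) {u v : V} (huv : G.Adj u v) :
    0 < ∑ k, (if G.Adj u k then c u k else 0) := by
  apply Finset.sum_pos'
  · intro k _
    by_cases h : G.Adj u k
    · rw [if_pos h]; exact (hpos u k h).le
    · rw [if_neg h]
  · exact ⟨v, Finset.mem_univ v, by rw [if_pos huv]; exact hpos u v huv⟩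

lemma one_le_wdeg_mul (hsymm : ∀ i j, c i j = c j i) (hpos : ∀ i j, G.Adj i j → 0 < c i j)
    {Qd : Matrix V V ℝ} (hQd : IsMoorePenroseInv (lapMatrix G c) Qd)
    {u v : V} (huv : G.Adj u v) :
    1 ≤ (∑ k, if G.Adj u k then c u k else 0) * effRes Qd u v := by
  have hcs := cs_effRes G c hsymm hpos hQd huv (Pi.single u 1 : V → ℝ)
  have h1 : (Pi.single u 1 : V → ℝ) u = 1 := by simp
  have h2 : (Pi.single u 1 : V → ℝ) v = 0 := by
    rw [Pi.single_eq_of_ne (Ne.symm huv.ne)]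
  have h3 : (Pi.single u 1 : V → ℝ) ⬝ᵥ lapMatrix G c *ᵥ (Pi.single u 1 : V → ℝ)
      = ∑ k, if G.Adj u k then c u k else 0 := by
    rw [single_dotProduct, one_mul, mulVec_single]
    simp only [MulOpposite.op_one, one_smul, Matrix.col_apply]
    rw [lap_apply]
    simp [G.irrefl]
  rw [h1, h2, h3] at hcs
  simpa using hcs

lemma effRes_pos (hsymm : ∀ i j, c i j = c j i) (hpos : ∀ i j, G.Adj i j → 0 < c i j)
    {Qd : Matrix V V ℝ} (hQd : IsMoorePenroseInv (lapMatrix G c) Qd)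
    {u v : V} (huv : G.Adj u v) : 0 < effRes Qd u v := by
  have h1 := one_le_wdeg_mul G c hsymm hpos hQd huv
  have h2 := wdeg_pos G c hpos huv
  nlinarith

/-- `ω ≥ 1 / weighted degree` for adjacent vertices. -/
lemma inv_wdeg_le_effRes (hsymm : ∀ i j, c i j = c j i)
    (hpos : ∀ i j, G.Adj i j → 0 < c i j)
    {Qd : Matrix V V ℝ} (hQd : IsMoorePenroseInv (lapMatrix G c) Qd)
    {u v : V} (huv : G.Adj u v) :
    1 / (∑ k, if G.Adj u k then c u k else 0) ≤ effRes Qd u v := by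
  have h1 := one_le_wdeg_mul G c hsymm hpos hQd huv
  have h2 := wdeg_pos G c hpos huv
  rw [div_le_iff₀ h2, mul_comm]
  linarith

lemma effRes_eq_double_sum (hsymm : ∀ i j, c i j = c j i)
    (hpos : ∀ i j, G.Adj i j → 0 < c i j)
    {Qd : Matrix V V ℝ} (hQd : IsMoorePenroseInv (lapMatrix G c) Qd)
    {u v : V} (huv : G.Adj u v) :
    effRes Qd u v = 1 / 2 * ∑ p, ∑ q,
      (if G.Adj p q then c p q *
        ((Qd *ᵥ (Pi.single u 1 - Pi.single v 1)) p
          - (Qd *ᵥ (Pi.single u 1 - Pi.single v 1)) q) ^ 2 else 0) := by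
  set Q := lapMatrix G c with hQdef
  set x : V → ℝ := Pi.single u 1 - Pi.single v 1 with hx
  set y : V → ℝ := Qd *ᵥ x with hy
  have hyx : Q *ᵥ y = x := range_fact G c hsymm hpos hQd huv
  have h2 : y ⬝ᵥ Q *ᵥ y = effRes Qd u v := by
    rw [hyx, dotProduct_comm, effRes_def]
  rw [← h2, lap_quadform G c hsymm y]

lemma y_sub_eq_effRes {Qd : Matrix V V ℝ} (u v : V) :
    (Qd *ᵥ (Pi.single u 1 - Pi.single v 1)) u
      - (Qd *ᵥ (Pi.single u 1 - Pi.single v 1)) v = effRes Qd u v := by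
  rw [effRes_def, sub_dotProduct, single_dotProduct, single_dotProduct]
  ring

lemma c_mul_effRes_le_one (hsymm : ∀ i j, c i j = c j i)
    (hpos : ∀ i j, G.Adj i j → 0 < c i j)
    {Qd : Matrix V V ℝ} (hQd : IsMoorePenroseInv (lapMatrix G c) Qd)
    {u v : V} (huv : G.Adj u v) :
    c u v * effRes Qd u v ≤ 1 := by
  set ω := effRes Qd u v with hω
  have hωpos : 0 < ω := effRes_pos G c hsymm hpos hQd huv
  set y : V → ℝ := Qd *ᵥ (Pi.single u 1 - Pi.single v 1) with hy
  set F : V × V → ℝ := fun pq =>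
    (if G.Adj pq.1 pq.2 then c pq.1 pq.2 * (y pq.1 - y pq.2) ^ 2 else 0) with hF
  have hT : ∑ pq ∈ Finset.univ ×ˢ Finset.univ, F pq = 2 * ω := by
    rw [Finset.sum_product]
    have := effRes_eq_double_sum G c hsymm hpos hQd huv
    rw [hω, this]; ring
  have hne : ((u, v) : V × V) ≠ (v, u) := by
    intro h
    exact huv.ne (congrArg Prod.fst h)
  have hyuv : y u - y v = ω := y_sub_eq_effRes u v
  have hpair : ∑ pq ∈ ({(u, v), (v, u)} : Finset (V × V)), F pq
      = 2 * (c u v * ω ^ 2) := by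
    rw [Finset.sum_pair hne]
    have e1 : F (u, v) = c u v * ω ^ 2 := by
      simp only [hF, if_pos huv, hyuv]
    have e2 : F (v, u) = c u v * ω ^ 2 := by
      simp only [hF]
      rw [if_pos huv.symm, hsymm v u]
      have : y v - y u = -ω := by rw [← hyuv]; ring
      rw [this]; ring
    rw [e1, e2]; ring
  have hFnn : ∀ pq ∈ Finset.univ ×ˢ Finset.univ, 0 ≤ F pq := by
    intro pq _
    exact quad_term_nonneg G c hpos y pq.1 pq.2
  have hsub : ∑ pq ∈ ({(u, v), (v, u)} : Finset (V × V)), F pq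
      ≤ ∑ pq ∈ Finset.univ ×ˢ Finset.univ, F pq := by
    apply Finset.sum_le_sum_of_subset_of_nonneg
    · intro pq _
      simp [Finset.mem_product]
    · intro pq h _
      exact hFnn pq h
  rw [hT, hpair] at hsub
  nlinarith

/-- Consequence of equality `c ω = 1`: the potential `y` is constant across every
link other than `(u,v)`. -/
lemma y_const_of_eq (hsymm : ∀ i j, c i j = c j i)
    (hpos : ∀ i j, G.Adj i j → 0 < c i j)
    {Qd : Matrix V V ℝ} (hQd : IsMoorePenroseInv (lapMatrix G c) Qd)
    {u v : V} (huv : G.Adj u v) (heq : c u v * effRes Qd u v = 1) :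
    ∀ p q, G.Adj p q → s(p, q) ≠ s(u, v) →
      (Qd *ᵥ (Pi.single u 1 - Pi.single v 1)) p
        = (Qd *ᵥ (Pi.single u 1 - Pi.single v 1)) q := by
  set ω := effRes Qd u v with hω
  have hωpos : 0 < ω := effRes_pos G c hsymm hpos hQd huv
  set y : V → ℝ := Qd *ᵥ (Pi.single u 1 - Pi.single v 1) with hy
  set F : V × V → ℝ := fun pq =>
    (if G.Adj pq.1 pq.2 then c pq.1 pq.2 * (y pq.1 - y pq.2) ^ 2 else 0) with hF
  have hT : ∑ pq ∈ Finset.univ ×ˢ Finset.univ, F pq = 2 * ω := by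
    rw [Finset.sum_product]
    have := effRes_eq_double_sum G c hsymm hpos hQd huv
    rw [hω, this]; ring
  have hne : ((u, v) : V × V) ≠ (v, u) := by
    intro h
    exact huv.ne (congrArg Prod.fst h)
  have hyuv : y u - y v = ω := y_sub_eq_effRes u v
  have hpair : ∑ pq ∈ ({(u, v), (v, u)} : Finset (V × V)), F pq
      = 2 * (c u v * ω ^ 2) := by
    rw [Finset.sum_pair hne]
    have e1 : F (u, v) = c u v * ω ^ 2 := by
      simp only [hF, if_pos huv, hyuv]
    have e2 : F (v, u) = c u v * ω ^ 2 := by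
      simp only [hF]
      rw [if_pos huv.symm, hsymm v u]
      have : y v - y u = -ω := by rw [← hyuv]; ring
      rw [this]; ring
    rw [e1, e2]; ring
  have hrest : ∑ pq ∈ (Finset.univ ×ˢ Finset.univ) \ ({(u, v), (v, u)} : Finset (V × V)),
      F pq = 0 := by
    rw [Finset.sum_sdiff_eq_sub (by intro pq _; simp [Finset.mem_product])]
    rw [hT, hpair]
    have : c u v * ω ^ 2 = ω := by nlinarith
    rw [this]; ring
  have hzero : ∀ pq ∈ (Finset.univ ×ˢ Finset.univ) \ ({(u, v), (v, u)} : Finset (V × V)),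
      F pq = 0 := by
    rw [← Finset.sum_eq_zero_iff_of_nonneg]
    · exact hrest
    · intro pq _
      exact quad_term_nonneg G c hpos y pq.1 pq.2
  intro p q hpq hs
  have hmem : (p, q) ∈ (Finset.univ ×ˢ Finset.univ) \ ({(u, v), (v, u)} : Finset (V × V)) := by
    rw [Finset.mem_sdiff]
    constructor
    · simp [Finset.mem_product]
    · intro hmem
      rcases Finset.mem_insert.mp hmem with h | h
      · apply hs
        simp only [Prod.mk.injEq] at h
        rw [h.1, h.2]
      · have h' := Finset.mem_singleton.mp h
        apply hs
        simp only [Prod.mk.injEq] at h'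
        rw [h'.1, h'.2, Sym2.eq_swap]
  have hF0 := hzero (p, q) hmem
  simp only [hF, if_pos hpq] at hF0
  have hc := hpos p q hpq
  have : (y p - y q) ^ 2 = 0 := by
    rcases mul_eq_zero.mp hF0 with h | h
    · exact absurd h hc.ne'
    · exact h
  have := pow_eq_zero_iff (n := 2) (by norm_num) |>.mp this
  linarith

/-- If removing the link `(u,v)` disconnects `u` from `v`, then `c ω = 1`. -/
lemma c_mul_effRes_eq_one_of_not_reachable (hsymm : ∀ i j, c i j = c j i)
    (hpos : ∀ i j, G.Adj i j → 0 < c i j)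
    {Qd : Matrix V V ℝ} (hQd : IsMoorePenroseInv (lapMatrix G c) Qd)
    {u v : V} (huv : G.Adj u v)
    (hnr : ¬ (G.deleteEdges {s(u, v)}).Reachable u v) :
    c u v * effRes Qd u v = 1 := by
  set G' := G.deleteEdges {s(u, v)} with hG'
  set z : V → ℝ := fun p => if G'.Reachable p u then 1 else 0 with hz
  have hzu : z u = 1 := if_pos (SimpleGraph.Reachable.refl u)
  have hzv : z v = 0 := if_neg (fun h => hnr h.symm)
  have hzQz : z ⬝ᵥ lapMatrix G c *ᵥ z = c u v := by
    rw [lap_quadform G c hsymm z]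
    have hkey : ∑ p, ∑ q, (if G.Adj p q then c p q * (z p - z q) ^ 2 else 0)
        = 2 * c u v := by
      rw [← Finset.sum_product']
      have hsub : ({(u, v), (v, u)} : Finset (V × V)) ⊆ Finset.univ ×ˢ Finset.univ := by
        intro pq _; simp [Finset.mem_product]
      rw [← Finset.sum_subset hsub]
      · have hne : ((u, v) : V × V) ≠ (v, u) := fun h => huv.ne (congrArg Prod.fst h)
        rw [Finset.sum_pair hne]
        simp only [if_pos huv, if_pos huv.symm, hzu, hzv, hsymm v u]
        ring
      · rintro ⟨p, q⟩ _ hns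
        by_cases hadj : G.Adj p q
        · have hsne : s(p, q) ≠ s(u, v) := by
            intro hs
            rcases Sym2.eq_iff.mp hs with ⟨rfl, rfl⟩ | ⟨rfl, rfl⟩
            · exact hns (by simp)
            · exact hns (by simp)
          have hadj' : G'.Adj p q := by
            rw [hG', SimpleGraph.deleteEdges_adj]
            exact ⟨hadj, by simpa using hsne⟩
          have hr : G'.Reachable p q := hadj'.reachable
          have hzeq : z p = z q := by
            by_cases hp : G'.Reachable p u
            · rw [hz]
              simp only [if_pos hp, if_pos (hr.symm.trans hp)]
            · have hq : ¬ G'.Reachable q u := fun hq => hp (hr.trans hq)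
              rw [hz]
              simp only [if_neg hp, if_neg hq]
          simp [hzeq]
        · simp [hadj]
    rw [hkey]; ring
  have hcs := cs_effRes G c hsymm hpos hQd huv z
  rw [hzu, hzv, hzQz] at hcs
  have hle := c_mul_effRes_le_one G c hsymm hpos hQd huv
  have : (1 : ℝ) ≤ c u v * effRes Qd u v := by
    simpa using hcs
  linarith

/-- If `c ω = 1` then removing the link `(u,v)` disconnects `u` from `v`. -/
lemma not_reachable_of_c_mul_effRes_eq_one (hsymm : ∀ i j, c i j = c j i)
    (hpos : ∀ i j, G.Adj i j → 0 < c i j)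
    {Qd : Matrix V V ℝ} (hQd : IsMoorePenroseInv (lapMatrix G c) Qd)
    {u v : V} (huv : G.Adj u v) (heq : c u v * effRes Qd u v = 1) :
    ¬ (G.deleteEdges {s(u, v)}).Reachable u v := by
  have hZ := y_const_of_eq G c hsymm hpos hQd huv heq
  set y : V → ℝ := Qd *ᵥ (Pi.single u 1 - Pi.single v 1) with hy
  have hωpos : 0 < effRes Qd u v := effRes_pos G c hsymm hpos hQd huv
  have hyuv : y u - y v = effRes Qd u v := y_sub_eq_effRes u v
  intro hr
  obtain ⟨w⟩ := hr
  have key : ∀ (a b : V), (G.deleteEdges {s(u, v)}).Walk a b → y a = y b := by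
    intro a b w
    induction w with
    | nil => rfl
    | cons h p ih =>
        rw [SimpleGraph.deleteEdges_adj] at h
        exact (hZ _ _ h.1 (by simpa using h.2)).trans ih
  have := key u v w
  rw [this] at hyuv
  simp at hyuv
  linarith

/-- A link is a cut link iff its removal disconnects its endpoints. -/
lemma isCutLink_iff_not_reachable {u v : V} (huv : G.Adj u v) :
    IsCutLink G u v ↔ ¬ (G.deleteEdges {s(u, v)}).Reachable u v := by
  set G' := G.deleteEdges {s(u, v)} with hG'
  have hle : G' ≤ G := SimpleGraph.deleteEdges_le _
  set φ : G'.ConnectedComponent → G.ConnectedComponent :=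
    SimpleGraph.ConnectedComponent.map (SimpleGraph.Hom.ofLE hle) with hφdef
  have hφ : ∀ w, φ (G'.connectedComponentMk w) = G.connectedComponentMk w := fun w => rfl
  have hsurj : Function.Surjective φ := by
    intro C
    exact C.ind (fun w => ⟨G'.connectedComponentMk w, hφ w⟩)
  constructor
  · rintro ⟨-, hlt⟩ hr
    have hstep : ∀ p q, G.Adj p q → G'.Reachable p q := by
      intro p q hpq
      by_cases hs : s(p, q) = s(u, v)
      · rcases Sym2.eq_iff.mp hs with ⟨rfl, rfl⟩ | ⟨rfl, rfl⟩
        · exact hr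
        · exact hr.symm
      · refine SimpleGraph.Adj.reachable ?_
        rw [hG', SimpleGraph.deleteEdges_adj]
        exact ⟨hpq, by simpa using hs⟩
    have hmono : ∀ p q, G.Reachable p q → G'.Reachable p q := by
      intro p q hpq
      obtain ⟨w⟩ := hpq
      induction w with
      | nil => exact SimpleGraph.Reachable.refl _
      | cons h p ih => exact (hstep _ _ h).trans ih
    have hinj : Function.Injective φ := by
      intro C D
      refine SimpleGraph.ConnectedComponent.ind₂ (fun p q h => ?_) C D
      rw [hφ, hφ] at h
      exact SimpleGraph.ConnectedComponent.eq.mpr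
        (hmono p q (SimpleGraph.ConnectedComponent.eq.mp h))
    have hcard : Nat.card G'.ConnectedComponent = Nat.card G.ConnectedComponent :=
      Nat.card_eq_of_bijective φ ⟨hinj, hsurj⟩
    rw [hcard] at hlt
    exact lt_irrefl _ hlt
  · intro hnr
    refine ⟨huv, ?_⟩
    haveI : Fintype G.ConnectedComponent := Fintype.ofFinite _
    haveI : Fintype G'.ConnectedComponent := Fintype.ofFinite _
    rw [Nat.card_eq_fintype_card, Nat.card_eq_fintype_card]
    apply Fintype.card_lt_of_surjective_not_injective φ hsurj
    intro hinj
    have h1 : φ (G'.connectedComponentMk u) = φ (G'.connectedComponentMk v) := by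
      rw [hφ, hφ]
      exact SimpleGraph.ConnectedComponent.eq.mpr huv.reachable
    exact hnr (SimpleGraph.ConnectedComponent.eq.mp (hinj h1))

/-- A link is a cut link iff `c ω = 1`. -/
lemma isCutLink_iff_c_mul_effRes (hsymm : ∀ i j, c i j = c j i)
    (hpos : ∀ i j, G.Adj i j → 0 < c i j)
    {Qd : Matrix V V ℝ} (hQd : IsMoorePenroseInv (lapMatrix G c) Qd)
    {u v : V} (huv : G.Adj u v) :
    IsCutLink G u v ↔ c u v * effRes Qd u v = 1 := by
  rw [isCutLink_iff_not_reachable G huv]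
  constructor
  · exact c_mul_effRes_eq_one_of_not_reachable G c hsymm hpos hQd huv
  · exact not_reachable_of_c_mul_effRes_eq_one G c hsymm hpos hQd huv

/-- The (real-valued, classical) combinatorial degree. -/
noncomputable def degR (G : SimpleGraph V) (u : V) : ℝ :=
  ∑ k, if G.Adj u k then (1 : ℝ) else 0

lemma nodeSum_le_degR (hsymm : ∀ i j, c i j = c j i)
    (hpos : ∀ i j, G.Adj i j → 0 < c i j)
    {Qd : Matrix V V ℝ} (hQd : IsMoorePenroseInv (lapMatrix G c) Qd) (u : V) :
    (∑ k, if G.Adj u k then c u k * effRes Qd u k else 0) ≤ degR G u := by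
  apply Finset.sum_le_sum
  intro k _
  by_cases h : G.Adj u k
  · rw [if_pos h, if_pos h]
    exact c_mul_effRes_le_one G c hsymm hpos hQd h
  · rw [if_neg h, if_neg h]

lemma one_le_nodeSum (hsymm : ∀ i j, c i j = c j i)
    (hpos : ∀ i j, G.Adj i j → 0 < c i j)
    {Qd : Matrix V V ℝ} (hQd : IsMoorePenroseInv (lapMatrix G c) Qd)
    {u v : V} (huv : G.Adj u v) :
    1 ≤ ∑ k, if G.Adj u k then c u k * effRes Qd u k else 0 := by
  set W : ℝ := ∑ k, if G.Adj u k then c u k else 0 with hW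
  have hWpos : 0 < W := wdeg_pos G c hpos huv
  have h1 : (1 : ℝ) = ∑ k, (if G.Adj u k then c u k else 0) / W := by
    rw [← Finset.sum_div, ← hW, div_self hWpos.ne']
  rw [h1]
  apply Finset.sum_le_sum
  intro k _
  by_cases h : G.Adj u k
  · rw [if_pos h, if_pos h]
    have hinv : 1 / W ≤ effRes Qd u k := inv_wdeg_le_effRes G c hsymm hpos hQd h
    have hc := hpos u k h
    calc c u k / W = c u k * (1 / W) := by ring
      _ ≤ c u k * effRes Qd u k := by
          exact mul_le_mul_of_nonneg_left hinv hc.le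
  · rw [if_neg h, if_neg h, zero_div]

lemma nodeSum_eq_degR_iff (hsymm : ∀ i j, c i j = c j i)
    (hpos : ∀ i j, G.Adj i j → 0 < c i j)
    {Qd : Matrix V V ℝ} (hQd : IsMoorePenroseInv (lapMatrix G c) Qd) (u : V) :
    (∑ k, if G.Adj u k then c u k * effRes Qd u k else 0) = degR G u
      ↔ ∀ k, G.Adj u k → c u k * effRes Qd u k = 1 := by
  have hle : ∀ k ∈ Finset.univ,
      (if G.Adj u k then c u k * effRes Qd u k else 0) ≤ (if G.Adj u k then (1:ℝ) else 0) := by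
    intro k _
    by_cases h : G.Adj u k
    · rw [if_pos h, if_pos h]
      exact c_mul_effRes_le_one G c hsymm hpos hQd h
    · rw [if_neg h, if_neg h]
  rw [degR]
  constructor
  · intro heq k hk
    have := (Finset.sum_eq_sum_iff_of_le hle).mp heq k (Finset.mem_univ k)
    rw [if_pos hk, if_pos hk] at this
    exact this
  · intro hall
    refine (Finset.sum_eq_sum_iff_of_le hle).mpr ?_
    intro k _
    by_cases h : G.Adj u k
    · rw [if_pos h, if_pos h, hall k h]
    · rw [if_neg h, if_neg h]

lemma nodeCurv_eq (Qd : Matrix V V ℝ) (u : V) :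
    nodeCurv G c Qd u
      = 1 - 1 / 2 * ∑ k, if G.Adj u k then c u k * effRes Qd u k else 0 := by
  unfold nodeCurv
  congr!

lemma degree_eq_degR [DecidableRel G.Adj] (u : V) :
    (G.degree u : ℝ) = degR G u := by
  rw [degR, ← SimpleGraph.card_neighborFinset_eq_degree, SimpleGraph.neighborFinset_eq_filter,
    Finset.card_filter]
  push_cast
  apply Finset.sum_congr rfl
  intro k _
  by_cases h : G.Adj u k <;> simp [h]

end Aux

/- STATEMENT 10: bounds `(4 - d_i - d_j)/ω_ij ≤ κ_ij ≤ 2/ω_ij` for the link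
resistance curvature, with equality in the lower bound iff all links incident
to `i` and to `j` are cut links. -/
theorem linkCurv_bounds
    [Fintype V] [DecidableEq V] (G : SimpleGraph V) [DecidableRel G.Adj]
    (c : V → V → ℝ) (hsymm : ∀ i j, c i j = c j i)
    (hpos : ∀ i j, G.Adj i j → 0 < c i j)
    (Qd : Matrix V V ℝ) (hQd : IsMoorePenroseInv (lapMatrix G c) Qd)
    (i j : V) (hij : G.Adj i j) :
    (4 - (G.degree i : ℝ) - (G.degree j : ℝ)) / effRes Qd i j ≤ linkCurv G c Qd i j ∧
    linkCurv G c Qd i j ≤ 2 / effRes Qd i j ∧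
    (linkCurv G c Qd i j =
        (4 - (G.degree i : ℝ) - (G.degree j : ℝ)) / effRes Qd i j ↔
      (∀ k, G.Adj i k → IsCutLink G i k) ∧ ∀ k, G.Adj j k → IsCutLink G j k) := by
  have hωpos : 0 < effRes Qd i j := effRes_pos G c hsymm hpos hQd hij
  have hpi := nodeCurv_eq G c Qd i
  have hpj := nodeCurv_eq G c Qd j
  have hSi_le := nodeSum_le_degR G c hsymm hpos hQd i
  have hSj_le := nodeSum_le_degR G c hsymm hpos hQd j
  have h1Si := one_le_nodeSum G c hsymm hpos hQd hij
  have h1Sj := one_le_nodeSum G c hsymm hpos hQd hij.symm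
  have hdi : (G.degree i : ℝ) = degR G i := degree_eq_degR G i
  have hdj : (G.degree j : ℝ) = degR G j := degree_eq_degR G j
  refine ⟨?_, ?_, ?_⟩
  · unfold linkCurv
    rw [hpi, hpj, hdi, hdj]
    apply (div_le_div_iff_of_pos_right hωpos).mpr
    linarith
  · unfold linkCurv
    rw [hpi, hpj]
    apply (div_le_div_iff_of_pos_right hωpos).mpr
    linarith
  · unfold linkCurv
    rw [hpi, hpj, hdi, hdj]
    have hcan : ∀ a b : ℝ, a / effRes Qd i j = b / effRes Qd i j ↔ a = b := by
      intro a b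
      constructor
      · intro h
        have := congrArg (fun t => t * effRes Qd i j) h
        field_simp at this
        exact this
      · intro h; rw [h]
    rw [hcan]
    constructor
    · intro h
      have hXi := hSi_le.antisymm (by linarith)
      have hYj := hSj_le.antisymm (by linarith)
      have hAi := (nodeSum_eq_degR_iff G c hsymm hpos hQd i).mp hXi
      have hAj := (nodeSum_eq_degR_iff G c hsymm hpos hQd j).mp hYj
      exact ⟨fun k hk => (isCutLink_iff_c_mul_effRes G c hsymm hpos hQd hk).mpr (hAi k hk),
        fun k hk => (isCutLink_iff_c_mul_effRes G c hsymm hpos hQd hk).mpr (hAj k hk)⟩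
    · rintro ⟨hA, hB⟩
      have hXi := (nodeSum_eq_degR_iff G c hsymm hpos hQd i).mpr
        (fun k hk => (isCutLink_iff_c_mul_effRes G c hsymm hpos hQd hk).mp (hA k hk))
      have hYj := (nodeSum_eq_degR_iff G c hsymm hpos hQd j).mpr
        (fun k hk => (isCutLink_iff_c_mul_effRes G c hsymm hpos hQd hk).mp (hB k hk))
      linarith
end
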